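/- arXiv:1712.09341 — 2 statements merged into one kernel-verified Lean document; each statement's English description precedes it below -/
import Mathlib

section
/- For all nonnegative integers n and real numbers m, r, x, the r-Dowling polynomials satisfy D_{m,r}(n+1; x) = \sum_{k=0}^n \binom{n}{k} m^{n-k} x\, D_{m,r}(k;x) + r\, D_{m,r}(n;x). -/
/-- The r-Whitney numbers of the second kind, defined by the triangular recurrence
`W m r n k = W m r (n-1) (k-1) + (m*k+r) * W m r (n-1) k`, with `W m r 0 0 = 1`
and vanishing for `k > n` (and for "k < 0", encoded by the `n+1, 0` case). -/
noncomputable def rWhitney (m r : ℝ) : ℕ → ℕ → ℝ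
  | 0, 0 => 1
  | 0, _ + 1 => 0
  | n + 1, 0 => r * rWhitney m r n 0
  | n + 1, k + 1 => rWhitney m r n k + (m * (k + 1) + r) * rWhitney m r n (k + 1)
/-- The r-Dowling polynomial: the sum over k ≤ n of `W m r n k * x^k`. -/
noncomputable def rDowling (m r : ℝ) (n : ℕ) (x : ℝ) : ℝ :=
  ∑ k ∈ Finset.range (n + 1), rWhitney m r n k * x ^ k

lemma rWhitney_succ_zero (m r : ℝ) (n : ℕ) :
    rWhitney m r (n + 1) 0 = r * rWhitney m r n 0 := by rw [rWhitney]

lemma rWhitney_succ_succ (m r : ℝ) (n k : ℕ) :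
    rWhitney m r (n + 1) (k + 1)
      = rWhitney m r n k + (m * ((k : ℝ) + 1) + r) * rWhitney m r n (k + 1) := by
  rw [rWhitney]

lemma rWhitney_eq_zero (m r : ℝ) : ∀ n k, n < k → rWhitney m r n k = 0 := by
  intro n
  induction n with
  | zero =>
    intro k hk
    cases k with
    | zero => omega
    | succ k => simp [rWhitney]
  | succ n ih =>
    intro k hk
    cases k with
    | zero => omega
    | succ k =>
      rw [rWhitney_succ_succ, ih k (by omega), ih (k + 1) (by omega)]
      ring

lemma keyA (m r : ℝ) : ∀ n, ∀ j,
    ∑ k ∈ Finset.range (n + 1), (n.choose k : ℝ) * m ^ (n - k) * rWhitney m r k j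
      = rWhitney m r n j + m * ((j : ℝ) + 1) * rWhitney m r n (j + 1) := by
  intro n
  induction n with
  | zero =>
    intro j
    cases j <;> simp [rWhitney]
  | succ n ih =>
    intro j
    have h1 : ∑ k ∈ Finset.range (n + 2),
        ((n + 1).choose k : ℝ) * m ^ (n + 1 - k) * rWhitney m r k j
        = (∑ k ∈ Finset.range (n + 1),
            ((n.choose k : ℝ) + (n.choose (k + 1) : ℝ)) * m ^ (n - k) * rWhitney m r (k + 1) j)
          + m ^ (n + 1) * rWhitney m r 0 j := by
      rw [Finset.sum_range_succ']
      congr 1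
      · refine Finset.sum_congr rfl fun k _ => ?_
        rw [Nat.succ_sub_succ, Nat.choose_succ_succ]
        push_cast
        ring
      · simp
    have h2 : ∑ k ∈ Finset.range (n + 1),
        ((n.choose k : ℝ) + (n.choose (k + 1) : ℝ)) * m ^ (n - k) * rWhitney m r (k + 1) j
        = (∑ k ∈ Finset.range (n + 1), (n.choose k : ℝ) * m ^ (n - k) * rWhitney m r (k + 1) j)
          + ∑ k ∈ Finset.range (n + 1), (n.choose (k + 1) : ℝ) * m ^ (n - k) * rWhitney m r (k + 1) j := by
      rw [← Finset.sum_add_distrib]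
      exact Finset.sum_congr rfl fun k _ => by ring
    have h3 : (∑ k ∈ Finset.range (n + 1), (n.choose (k + 1) : ℝ) * m ^ (n - k) * rWhitney m r (k + 1) j)
          + m ^ (n + 1) * rWhitney m r 0 j
        = m * (rWhitney m r n j + m * ((j : ℝ) + 1) * rWhitney m r n (j + 1)) := by
      have e1 : ∑ k ∈ Finset.range (n + 2), (n.choose k : ℝ) * m ^ (n + 1 - k) * rWhitney m r k j
          = (∑ k ∈ Finset.range (n + 1), (n.choose (k + 1) : ℝ) * m ^ (n - k) * rWhitney m r (k + 1) j)
            + m ^ (n + 1) * rWhitney m r 0 j := by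
        rw [Finset.sum_range_succ']
        simp [Nat.succ_sub_succ]
      have e2 : ∑ k ∈ Finset.range (n + 2), (n.choose k : ℝ) * m ^ (n + 1 - k) * rWhitney m r k j
          = ∑ k ∈ Finset.range (n + 1), (n.choose k : ℝ) * m ^ (n + 1 - k) * rWhitney m r k j := by
        rw [Finset.sum_range_succ]
        simp [Nat.choose_succ_self]
      have e3 : ∑ k ∈ Finset.range (n + 1), (n.choose k : ℝ) * m ^ (n + 1 - k) * rWhitney m r k j
          = m * ∑ k ∈ Finset.range (n + 1), (n.choose k : ℝ) * m ^ (n - k) * rWhitney m r k j := by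
        rw [Finset.mul_sum]
        refine Finset.sum_congr rfl fun k hk => ?_
        have hkn : k ≤ n := Nat.lt_succ_iff.mp (Finset.mem_range.mp hk)
        have hs : n + 1 - k = (n - k) + 1 := by omega
        rw [hs, pow_succ]
        ring
      rw [← e1, e2, e3, ih j]
    cases j with
    | zero =>
      have h4 : ∑ k ∈ Finset.range (n + 1), (n.choose k : ℝ) * m ^ (n - k) * rWhitney m r (k + 1) 0
          = r * ∑ k ∈ Finset.range (n + 1), (n.choose k : ℝ) * m ^ (n - k) * rWhitney m r k 0 := by
        rw [Finset.mul_sum]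
        refine Finset.sum_congr rfl fun k _ => ?_
        rw [rWhitney_succ_zero]; ring
      rw [h1, h2, h4, ih 0, rWhitney_succ_zero, rWhitney_succ_succ]
      push_cast at h3 ⊢
      linear_combination h3
    | succ j =>
      have h4 : ∑ k ∈ Finset.range (n + 1), (n.choose k : ℝ) * m ^ (n - k) * rWhitney m r (k + 1) (j + 1)
          = (∑ k ∈ Finset.range (n + 1), (n.choose k : ℝ) * m ^ (n - k) * rWhitney m r k j)
            + (m * ((j : ℝ) + 1) + r)
              * ∑ k ∈ Finset.range (n + 1), (n.choose k : ℝ) * m ^ (n - k) * rWhitney m r k (j + 1) := by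
        rw [Finset.mul_sum, ← Finset.sum_add_distrib]
        refine Finset.sum_congr rfl fun k _ => ?_
        rw [rWhitney_succ_succ]; ring
      rw [h1, h2, h4, ih j, ih (j + 1),
        rWhitney_succ_succ m r n j, rWhitney_succ_succ m r n (j + 1)]
      push_cast at h3 ⊢
      linear_combination h3

theorem rDowling_single_step (n : ℕ) (m r x : ℝ) :
    rDowling m r (n + 1) x =
      (∑ k ∈ Finset.range (n + 1),
        (n.choose k : ℝ) * m ^ (n - k) * x * rDowling m r k x) +
      r * rDowling m r n x := by
  have hD : ∀ k ∈ Finset.range (n + 1), rDowling m r k x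
      = ∑ j ∈ Finset.range (n + 1), rWhitney m r k j * x ^ j := by
    intro k hk
    have hkn : k ≤ n := Nat.lt_succ_iff.mp (Finset.mem_range.mp hk)
    unfold rDowling
    refine Finset.sum_subset ?_ ?_
    · intro j hj
      simp only [Finset.mem_range] at hj ⊢
      omega
    · intro j _ hj
      simp only [Finset.mem_range, not_lt] at hj
      rw [rWhitney_eq_zero m r k j (by omega), zero_mul]
  have hswap : ∑ k ∈ Finset.range (n + 1),
      (n.choose k : ℝ) * m ^ (n - k) * x * rDowling m r k x
      = ∑ j ∈ Finset.range (n + 1),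
          (rWhitney m r n j + m * ((j : ℝ) + 1) * rWhitney m r n (j + 1)) * x ^ (j + 1) := by
    calc ∑ k ∈ Finset.range (n + 1), (n.choose k : ℝ) * m ^ (n - k) * x * rDowling m r k x
        = ∑ k ∈ Finset.range (n + 1), ∑ j ∈ Finset.range (n + 1),
            (n.choose k : ℝ) * m ^ (n - k) * rWhitney m r k j * x ^ (j + 1) := by
          refine Finset.sum_congr rfl fun k hk => ?_
          rw [hD k hk, Finset.mul_sum]
          refine Finset.sum_congr rfl fun j _ => by ring
      _ = ∑ j ∈ Finset.range (n + 1), ∑ k ∈ Finset.range (n + 1),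
            (n.choose k : ℝ) * m ^ (n - k) * rWhitney m r k j * x ^ (j + 1) :=
          Finset.sum_comm
      _ = ∑ j ∈ Finset.range (n + 1),
            (rWhitney m r n j + m * ((j : ℝ) + 1) * rWhitney m r n (j + 1)) * x ^ (j + 1) := by
          refine Finset.sum_congr rfl fun j _ => ?_
          rw [← Finset.sum_mul, keyA]
  have hr : (∑ j ∈ Finset.range (n + 1), r * (rWhitney m r n (j + 1) * x ^ (j + 1)))
        + r * (rWhitney m r n 0 * x ^ 0) = r * rDowling m r n x := by
    rw [Finset.sum_range_succ, rWhitney_eq_zero m r n (n + 1) (by omega)]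
    unfold rDowling
    rw [Finset.sum_range_succ' (fun j => rWhitney m r n j * x ^ j) n, mul_add, Finset.mul_sum]
    ring
  have hL : rDowling m r (n + 1) x
      = (∑ j ∈ Finset.range (n + 1),
          (rWhitney m r n j + m * ((j : ℝ) + 1) * rWhitney m r n (j + 1)) * x ^ (j + 1))
        + ((∑ j ∈ Finset.range (n + 1), r * (rWhitney m r n (j + 1) * x ^ (j + 1)))
          + r * (rWhitney m r n 0 * x ^ 0)) := by
    unfold rDowling
    rw [Finset.sum_range_succ' (fun j => rWhitney m r (n + 1) j * x ^ j) (n + 1)]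
    rw [rWhitney_succ_zero, ← add_assoc, ← Finset.sum_add_distrib]
    congr 1
    · refine Finset.sum_congr rfl fun j _ => ?_
      rw [rWhitney_succ_succ]; ring
    · ring
  rw [hL, hswap, hr]
end

section
/- For all nonnegative integers n and real numbers m, r and x, applying the operator identity to the exponential function yields e^{-x}(mXD+r)^n e^x = \sum_{k=0}^n W_{m,r}(n,k) (mx)^k, i.e., the normal-ordered expansion of (mXD+r)^n evaluated on e^x equals D_{m,r}(n; mx) e^x. -/
/-!
Since `(mXD + r)(e^y p(my)) = e^y ((my + r) p(my) + m (my) p'(my))`, the operator `mXD + r` carries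
`e^y D_{m,r}(n; my)` to `e^y D_{m,r}(n+1; my)`: the triangular recurrence for `W_{m,r}` is the same as
`D_{m,r}(n+1; t) = (t + r) D_{m,r}(n; t) + m t D_{m,r}'(n; t)`.
-/

section

variable (m r : ℝ)

lemma rWhitney_eq_zero_of_lt : ∀ {n k : ℕ}, n < k → rWhitney m r n k = 0
  | 0, _ + 1, _ => rfl
  | n + 1, k + 1, h => by
    simp only [rWhitney, rWhitney_eq_zero_of_lt (by omega : n < k),
      rWhitney_eq_zero_of_lt (by omega : n < k + 1), mul_zero, add_zero]

lemma hasDerivAt_rDowling (n : ℕ) (t : ℝ) :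
    HasDerivAt (rDowling m r n)
      (∑ k ∈ Finset.range (n + 1), rWhitney m r n k * (k * t ^ (k - 1))) t := by
  unfold rDowling
  exact HasDerivAt.fun_sum fun k _ => (hasDerivAt_pow k t).const_mul _

lemma mul_deriv_rDowling (n : ℕ) (t : ℝ) :
    t * deriv (rDowling m r n) t = ∑ k ∈ Finset.range (n + 1), k * rWhitney m r n k * t ^ k := by
  rw [(hasDerivAt_rDowling m r n t).deriv, Finset.mul_sum]
  refine Finset.sum_congr rfl fun k _ => ?_
  rcases k with _ | k
  · simp
  · rw [add_tsub_cancel_right, pow_succ]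
    ring

lemma rDowling_succ (n : ℕ) (t : ℝ) :
    rDowling m r (n + 1) t = (t + r) * rDowling m r n t + m * (t * deriv (rDowling m r n) t) := by
  set W := rWhitney m r
  set weighted : ℕ → ℝ := fun k => (m * k + r) * W n k * t ^ k
  have hweighted : ∑ k ∈ Finset.range (n + 1), weighted (k + 1) + r * W n 0 =
      ∑ k ∈ Finset.range (n + 1), weighted k := by
    have hvanish : weighted (n + 1) = 0 := by
      simp [weighted, W, rWhitney_eq_zero_of_lt m r (Nat.lt_succ_self n)]
    rw [← add_zero (∑ k ∈ Finset.range (n + 1), weighted k), ← hvanish,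
      ← Finset.sum_range_succ, Finset.sum_range_succ' weighted (n + 1)]
    simp [weighted]
  calc rDowling m r (n + 1) t
      = ∑ k ∈ Finset.range (n + 1), (W n k * t ^ (k + 1) + weighted (k + 1)) + r * W n 0 := by
        rw [rDowling, Finset.sum_range_succ']
        congr 1
        · exact Finset.sum_congr rfl fun k _ => by simp only [W, weighted, rWhitney]; push_cast; ring
        · simp [W, rWhitney]
    _ = t * ∑ k ∈ Finset.range (n + 1), W n k * t ^ k +
          ∑ k ∈ Finset.range (n + 1), weighted k := by
        rw [← hweighted, Finset.sum_add_distrib, add_assoc, Finset.mul_sum]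
        congr 1
        exact Finset.sum_congr rfl fun k _ => by ring
    _ = _ := by
        simp only [rDowling, mul_deriv_rDowling, weighted, Finset.mul_sum, ← Finset.sum_add_distrib]
        exact Finset.sum_congr rfl fun k _ => by ring

/-- The operator `mXD + r`. -/
noncomputable def whitneyOp (f : ℝ → ℝ) : ℝ → ℝ := fun y => m * y * deriv f y + r * f y

lemma iterate_whitneyOp_exp (n : ℕ) :
    (whitneyOp m r)^[n] Real.exp = fun y => Real.exp y * rDowling m r n (m * y) := by
  induction n with
  | zero => funext y; simp [rDowling, rWhitney]
  | succ n ih =>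
    funext y
    have hdiff : DifferentiableAt ℝ (fun y => rDowling m r n (m * y)) y :=
      (hasDerivAt_rDowling m r n (m * y)).differentiableAt.comp y
        (differentiableAt_id.const_mul m)
    rw [Function.iterate_succ_apply', ih, whitneyOp, deriv_fun_mul Real.differentiableAt_exp hdiff,
      Real.deriv_exp, deriv_comp_mul_left, smul_eq_mul, rDowling_succ]
    ring

end

theorem rWhitney_exp (n : ℕ) (m r x : ℝ) :
    Real.exp (-x) *
      ((fun f : ℝ → ℝ => fun y => m * y * deriv f y + r * f y)^[n] Real.exp) x =
    rDowling m r n (m * x) := by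
  rw [show (fun f : ℝ → ℝ => fun y => m * y * deriv f y + r * f y) = whitneyOp m r from rfl,
    iterate_whitneyOp_exp, ← mul_assoc, ← Real.exp_add, neg_add_cancel, Real.exp_zero, one_mul]
end
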